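/- Let F be an r-sort species admitting a composition operator Η. Then for every r-tuple Ω of finite sets, F[Ω] = ⋃_{k ≥ 0} F_Η^(k)[Ω]; that is, every element of F[Ω] lies in F_Η^(k)[Ω] for some nonnegative integer k. -/

import Mathlib

open scoped Classical

noncomputable section

/-- Objects of `Set^r`: `r`-tuples of finite sets (realized as finite subsets of `ℕ`). -/
abbrev Obj (r : ℕ) := Fin r → Finset ℕ

variable {r : ℕ}

/-- The `r`-tuple of empty sets. -/
def oEmpty (r : ℕ) : Obj r := fun _ => ∅

/-- Componentwise union (the disjoint union `⨿` when the arguments are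
componentwise disjoint). -/
def oUnion (Ω₁ Ω₂ : Obj r) : Obj r := fun i => Ω₁ i ∪ Ω₂ i

/-- Componentwise intersection. -/
def oInter (Ω₁ Ω₂ : Obj r) : Obj r := fun i => Ω₁ i ∩ Ω₂ i

/-- Componentwise set difference. -/
def oDiff (Ω₁ Ω₂ : Obj r) : Obj r := fun i => Ω₁ i \ Ω₂ i

/-- Componentwise disjointness. -/
def oDisj (Ω₁ Ω₂ : Obj r) : Prop := ∀ i, Disjoint (Ω₁ i) (Ω₂ i)

/-- Componentwise containment. -/
def oSub (Ω₁ Ω₂ : Obj r) : Prop := ∀ i, Ω₁ i ⊆ Ω₂ i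

/-- A morphism of `Set^r`: an `r`-tuple of bijections between the components. -/
def Mor (Ω₁ Ω₂ : Obj r) : Type := ∀ i, {x // x ∈ Ω₁ i} ≃ {x // x ∈ Ω₂ i}

/-- The identity morphism. -/
def idMor (Ω : Obj r) : Mor Ω Ω := fun _ => Equiv.refl _

/-- Composition of morphisms. -/
def compMor {Ω₁ Ω₂ Ω₃ : Obj r} (f : Mor Ω₁ Ω₂) (g : Mor Ω₂ Ω₃) : Mor Ω₁ Ω₃ :=
  fun i => (f i).trans (g i)

/-- An `r`-sort species: a (covariant) functor from `Set^r` to the category of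
finite sets and bijections.  The value `F[Ω]` is the finite set `obj Ω`, and the
action on a morphism `f` is encoded by the function `map f : ℕ → ℕ` (only its
values on `obj Ω₁` are relevant). -/
structure Species (r : ℕ) where
  obj : Obj r → Finset ℕ
  map : ∀ {Ω₁ Ω₂ : Obj r}, Mor Ω₁ Ω₂ → ℕ → ℕ
  map_mem : ∀ {Ω₁ Ω₂ : Obj r} (f : Mor Ω₁ Ω₂), ∀ x ∈ obj Ω₁, map f x ∈ obj Ω₂
  map_id : ∀ (Ω : Obj r), ∀ x ∈ obj Ω, map (idMor Ω) x = x
  map_comp : ∀ {Ω₁ Ω₂ Ω₃ : Obj r} (f : Mor Ω₁ Ω₂) (g : Mor Ω₂ Ω₃), ∀ x ∈ obj Ω₁,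
    map (compMor f g) x = map g (map f x)

/-- The canonical identification of a disjoint union `s ∪ t` with the sum `s ⊕ t`. -/
def finsetSumEquiv {s t : Finset ℕ} (h : Disjoint s t) :
    {x // x ∈ s ∪ t} ≃ {x // x ∈ s} ⊕ {x // x ∈ t} :=
  (Equiv.subtypeEquivRight (fun x => by simp)).trans
    (Equiv.Set.union (s := (↑s : Set ℕ)) (t := (↑t : Set ℕ)) (by exact_mod_cast h))

/-- The disjoint union of two bijections, as a bijection between unions. -/
def finsetUnionEquiv {s t s' t' : Finset ℕ} (h : Disjoint s t) (h' : Disjoint s' t')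
    (f : {x // x ∈ s} ≃ {x // x ∈ s'}) (g : {x // x ∈ t} ≃ {x // x ∈ t'}) :
    {x // x ∈ s ∪ t} ≃ {x // x ∈ s' ∪ t'} :=
  (finsetSumEquiv h).trans ((f.sumCongr g).trans (finsetSumEquiv h').symm)

/-- The disjoint union `f ⨿ g` of two morphisms of `Set^r`. -/
def morUnion {Ω₁ Ω₂ Ω₁' Ω₂' : Obj r} (h : oDisj Ω₁ Ω₂) (h' : oDisj Ω₁' Ω₂')
    (f : Mor Ω₁ Ω₁') (g : Mor Ω₂ Ω₂') : Mor (oUnion Ω₁ Ω₂) (oUnion Ω₁' Ω₂') :=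
  fun i => finsetUnionEquiv (h i) (h' i) (f i) (g i)

/-- A composition operator `Η` for the species `F`: a natural transformation from
`F × F` (on pairs of componentwise disjoint objects) to `F ∘ ⨿` with injective
components, satisfying Axiom (D1). -/
structure CompOp {r : ℕ} (F : Species r) where
  η : Obj r → Obj r → ℕ × ℕ → ℕ
  mem_η : ∀ {Ω₁ Ω₂ : Obj r}, oDisj Ω₁ Ω₂ → ∀ x ∈ F.obj Ω₁, ∀ y ∈ F.obj Ω₂,
    η Ω₁ Ω₂ (x, y) ∈ F.obj (oUnion Ω₁ Ω₂)
  inj_η : ∀ {Ω₁ Ω₂ : Obj r}, oDisj Ω₁ Ω₂ →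
    Set.InjOn (η Ω₁ Ω₂) ((F.obj Ω₁ : Set ℕ) ×ˢ (F.obj Ω₂ : Set ℕ))
  natural : ∀ {Ω₁ Ω₂ Ω₁' Ω₂' : Obj r} (h : oDisj Ω₁ Ω₂) (h' : oDisj Ω₁' Ω₂')
    (f : Mor Ω₁ Ω₁') (g : Mor Ω₂ Ω₂'), ∀ x ∈ F.obj Ω₁, ∀ y ∈ F.obj Ω₂,
    F.map (morUnion h h' f g) (η Ω₁ Ω₂ (x, y)) = η Ω₁' Ω₂' (F.map f x, F.map g y)
  D1 : ∀ {Ω₁ Ω₂ Ω₃ Ω₄ : Obj r}, oDisj Ω₁ Ω₂ → oDisj Ω₃ Ω₄ →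
    oUnion Ω₁ Ω₂ = oUnion Ω₃ Ω₄ →
    η Ω₁ Ω₂ '' ((F.obj Ω₁ : Set ℕ) ×ˢ (F.obj Ω₂ : Set ℕ)) ∩
      η Ω₃ Ω₄ '' ((F.obj Ω₃ : Set ℕ) ×ˢ (F.obj Ω₄ : Set ℕ)) =
    η Ω₁ Ω₂ ''
      ((η (oInter Ω₁ Ω₃) (oInter Ω₁ Ω₄) ''
          ((F.obj (oInter Ω₁ Ω₃) : Set ℕ) ×ˢ (F.obj (oInter Ω₁ Ω₄) : Set ℕ))) ×ˢ
        (η (oInter Ω₂ Ω₃) (oInter Ω₂ Ω₄) ''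
          ((F.obj (oInter Ω₂ Ω₃) : Set ℕ) ×ˢ (F.obj (oInter Ω₂ Ω₄) : Set ℕ))))

/-- The set `F_Η[Ω]` of indecomposable elements of `F[Ω]`. -/
def indec (F : Species r) (E : CompOp F) (Ω : Obj r) : Set ℕ :=
  if Ω = oEmpty r then ∅
  else (F.obj Ω : Set ℕ) \
    ⋃ (p : Obj r × Obj r) (_ : oDisj p.1 p.2) (_ : p.1 ≠ oEmpty r) (_ : p.2 ≠ oEmpty r)
      (_ : oUnion p.1 p.2 = Ω),
      E.η p.1 p.2 '' ((F.obj p.1 : Set ℕ) ×ˢ (F.obj p.2 : Set ℕ))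

/-- The sets `F_Η^(k)[Ω]` of elements of `F[Ω]` consisting of exactly `k`
indecomposable components. -/
def indecK (F : Species r) (E : CompOp F) : ℕ → Obj r → Set ℕ
  | 0 => fun Ω => if Ω = oEmpty r then (F.obj (oEmpty r) : Set ℕ) else ∅
  | (k + 1) => fun Ω => ⋃ (Ω₁ : Obj r) (_ : oSub Ω₁ Ω),
      E.η Ω₁ (oDiff Ω Ω₁) '' ((indec F E Ω₁) ×ˢ (indecK F E k (oDiff Ω Ω₁)))

/-- `Ω_I`: the componentwise disjoint union of the family `Ωs` over the index set `s`. -/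
def bigU {ι : Type} [DecidableEq ι] (Ωs : ι → Obj r) (s : Finset ι) : Obj r :=
  fun i => s.biUnion (fun j => Ωs j i)

/-- `Brack F E Ωs leaf s B` says that `B` is an `Η`-bracketing of the sets
`leaf (Ωs i)`, `i ∈ s` (each occurring exactly once).  For `leaf Ω = F[Ω]` this is an
`Η`-bracketing of the `F[Ωs i]`; for `leaf = indec F E` it is an `Η`-bracketing of
the `F_Η[Ωs i]`. -/
inductive Brack (F : Species r) (E : CompOp F) {ι : Type} [DecidableEq ι]
    (Ωs : ι → Obj r) (leaf : Obj r → Set ℕ) : Finset ι → Set ℕ → Prop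
  | single (i : ι) : Brack F E Ωs leaf {i} (leaf (Ωs i))
  | node {s t : Finset ι} {B₁ B₂ : Set ℕ} :
      Disjoint s t → s.Nonempty → t.Nonempty →
      Brack F E Ωs leaf s B₁ → Brack F E Ωs leaf t B₂ →
      Brack F E Ωs leaf (s ∪ t) (E.η (bigU Ωs s) (bigU Ωs t) '' (B₁ ×ˢ B₂))

/-- A `Λ`-weight on `(F, Η)`: Axioms (W0), (W1), (W2). -/
structure Weight {r : ℕ} (F : Species r) (E : CompOp F) (Λ : Type) [CommRing Λ]
    [Algebra ℚ Λ] where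
  w : Obj r → ℕ → Λ
  W0 : ∀ x ∈ F.obj (oEmpty r), w (oEmpty r) x = 1
  W1 : ∀ {Ω Ω' : Obj r} (f : Mor Ω Ω'), ∀ x ∈ F.obj Ω, w Ω' (F.map f x) = w Ω x
  W2 : ∀ {Ω₁ Ω₂ : Obj r}, oDisj Ω₁ Ω₂ → ∀ x ∈ indec F E Ω₁, ∀ y ∈ F.obj Ω₂,
    w (oUnion Ω₁ Ω₂) (E.η Ω₁ Ω₂ (x, y)) = w Ω₁ x * w Ω₂ y

/-- The standard object `([n₁], …, [n_r])`, with `[n] = {1, …, n}`. -/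
def stdObj {r : ℕ} (n : Fin r → ℕ) : Obj r := fun i => Finset.Icc 1 (n i)

/-- The exponential generating function
`Σ_{n₁,…,n_r ≥ 0} Σ_{x ∈ S[([n₁],…,[n_r])]} w(x) z₁^{n₁} ⋯ z_r^{n_r}/(n₁! ⋯ n_r!)`
of a subfamily `S` of a species `F`, with respect to a weight `w`. -/
def GF {r : ℕ} {Λ : Type} [CommRing Λ] [Algebra ℚ Λ] (F : Species r)
    (S : Obj r → Set ℕ) (w : Obj r → ℕ → Λ) : MvPowerSeries (Fin r) Λ :=
  fun d => (algebraMap ℚ Λ (∏ i, (1 / (Nat.factorial (d i)) : ℚ))) *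
    ∑ x ∈ (F.obj (stdObj fun i => d i)).filter (fun x => x ∈ S (stdObj fun i => d i)),
      w (stdObj fun i => d i) x

/-- The exponential `exp f = Σ_{k ≥ 0} f^k / k!` of a multivariate formal power
series `f` with zero constant term (the coefficient of a given monomial only
receives contributions from `k` at most the total degree). -/
def mvExp {σ Λ : Type} [CommRing Λ] [Algebra ℚ Λ] (f : MvPowerSeries σ Λ) :
    MvPowerSeries σ Λ :=
  fun d => ∑ k ∈ Finset.range ((d.sum fun _ m => m) + 1),
    algebraMap ℚ Λ ((1 : ℚ) / (Nat.factorial k)) * MvPowerSeries.coeff d (f ^ k)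

/-- The logarithm `log f = Σ_{k ≥ 1} (-1)^{k+1} (f-1)^k / k` of a multivariate
formal power series `f` with constant term `1`. -/
def mvLog {σ Λ : Type} [CommRing Λ] [Algebra ℚ Λ] (f : MvPowerSeries σ Λ) :
    MvPowerSeries σ Λ :=
  fun d => ∑ k ∈ Finset.Icc 1 (d.sum fun _ m => m),
    algebraMap ℚ Λ ((-1 : ℚ) ^ (k + 1) / k) * MvPowerSeries.coeff d ((f - 1) ^ k)

/-- The refined generating function `G̃F_F(z₁,…,z_r,y)`, a power series in
`z₁, …, z_r` with coefficients that are polynomials in `y` (recorded via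
`Polynomial Λ`, the variable `y` being `Polynomial.X`):
`Σ_{n₁,…,n_r ≥ 0} Σ_k Σ_{x ∈ F_Η^(k)[([n₁],…,[n_r])]} y^k w(x) z₁^{n₁}⋯z_r^{n_r}/(n₁!⋯n_r!)`
(for fixed `n₁, …, n_r` only the `k ≤ n₁ + ⋯ + n_r` contribute, since
`F_Η^(k)[Ω] = ∅ for k > ‖Ω‖`). -/
def tGF {r : ℕ} {Λ : Type} [CommRing Λ] [Algebra ℚ Λ] (F : Species r) (E : CompOp F)
    (w : Obj r → ℕ → Λ) : MvPowerSeries (Fin r) (Polynomial Λ) :=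
  fun d => Polynomial.C (algebraMap ℚ Λ (∏ i, (1 / (Nat.factorial (d i)) : ℚ))) *
    ∑ k ∈ Finset.range ((∑ i, d i) + 1), Polynomial.X ^ k *
      Polynomial.C (∑ x ∈ (F.obj (stdObj fun i => d i)).filter
          (fun x => x ∈ indecK F E k (stdObj fun i => d i)),
        w (stdObj fun i => d i) x)

/-- The species `E(F_Η)` of sets of `F_Η`-structures:  `E(F_Η)[Ω]` consists of all
finite sets `{(x₁,Ω₁),…,(x_k,Ω_k)}` with `x_i ∈ F_Η[Ω_i]`, the `Ω_i` nonempty and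
pairwise componentwise disjoint, and `Ω₁ ⨿ ⋯ ⨿ Ω_k = Ω`. -/
def ESet {r : ℕ} (F : Species r) (E : CompOp F) (Ω : Obj r) :
    Set (Finset (ℕ × Obj r)) :=
  { s | (∀ p ∈ s, p.1 ∈ indec F E p.2 ∧ p.2 ≠ oEmpty r) ∧
        (∀ p ∈ s, ∀ q ∈ s, p ≠ q → oDisj p.2 q.2) ∧
        (∀ i, Ω i = s.biUnion (fun p => p.2 i)) }

/-- The bijection between a finite set and its image under a map injective on it. -/
def imageEquiv {u : Finset ℕ} (g : ℕ → ℕ) (hg : Set.InjOn g (u : Set ℕ)) :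
    {x // x ∈ u} ≃ {x // x ∈ u.image g} :=
  Equiv.ofBijective (fun x => ⟨g x, Finset.mem_image_of_mem g x.2⟩) (by
    constructor
    · rintro ⟨a, ha⟩ ⟨b, hb⟩ hab
      exact Subtype.ext (hg (by exact_mod_cast ha) (by exact_mod_cast hb)
        (congrArg Subtype.val hab))
    · rintro ⟨y, hy⟩
      rcases Finset.mem_image.mp hy with ⟨a, ha, rfl⟩
      exact ⟨⟨a, ha⟩, rfl⟩)

/-- The underlying function `ℕ → ℕ` of the `i`-th component of a morphism. -/
def apMor {Ω Ω' : Obj r} (f : Mor Ω Ω') (i : Fin r) (a : ℕ) : ℕ :=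
  if h : a ∈ Ω i then ((f i) ⟨a, h⟩ : ℕ) else a

/-- The componentwise image of a subobject `O ⊆ Ω` under a morphism `f : Ω → Ω'`. -/
def oImage {Ω Ω' : Obj r} (f : Mor Ω Ω') (O : Obj r) : Obj r :=
  fun i => (O i).image (apMor f i)

/-- The restriction of a morphism `f : Ω → Ω'` to a subobject `O ⊆ Ω`. -/
def restrictMor {Ω Ω' : Obj r} (f : Mor Ω Ω') {O : Obj r} (hO : oSub O Ω) :
    Mor O (oImage f O) :=
  fun i => imageEquiv (apMor f i) (by
    intro a ha b hb hab
    have ha' : a ∈ Ω i := hO i (by exact_mod_cast ha)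
    have hb' : b ∈ Ω i := hO i (by exact_mod_cast hb)
    have h1 : ((f i) ⟨a, ha'⟩ : ℕ) = ((f i) ⟨b, hb'⟩ : ℕ) := by
      simpa [apMor, dif_pos ha', dif_pos hb'] using hab
    have h2 := (f i).injective (Subtype.ext h1)
    exact congrArg Subtype.val h2)

/-- The induced action of a morphism `f : Ω → Ω'` on `E(F_Η)[Ω]`. -/
def Emap {r : ℕ} (F : Species r) {Ω Ω' : Obj r} (f : Mor Ω Ω')
    (s : Finset (ℕ × Obj r)) : Finset (ℕ × Obj r) :=
  s.image (fun p =>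
    if h : oSub p.2 Ω then (F.map (restrictMor f h) p.1, oImage f p.2) else p)


/-! An element `x ∈ F[Ω]` with `Ω ≠ ∅` is `η(x, e)` for some `e ∈ F[∅]`
(Axiom (D1) applied to a decomposition and itself makes `F[∅]` a two-sided unit).
Among all decompositions `x = η(y, z)` with `y ∈ F[Ω₁]`, `Ω₁ ≠ ∅`, take one with `Ω₁`
minimal: then `y` is indecomposable, since a splitting `y = η(a, b)` would, again by
(D1), re-associate to a decomposition of `x` with the strictly smaller left part `A ⊂ Ω₁`.
Induction on `Ω − Ω₁ ⊂ Ω` then puts `z`, hence `x`, into some `F_Η^(k)`. -/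

lemma oEmpty_eq_bot : oEmpty r = ⊥ := rfl

lemma oDiff_eq_sdiff (Ω₁ Ω₂ : Obj r) : oDiff Ω₁ Ω₂ = Ω₁ \ Ω₂ := rfl

lemma oSub_iff_le {Ω₁ Ω₂ : Obj r} : oSub Ω₁ Ω₂ ↔ Ω₁ ≤ Ω₂ := Iff.rfl

lemma oDisj_iff_disjoint {Ω₁ Ω₂ : Obj r} : oDisj Ω₁ Ω₂ ↔ Disjoint Ω₁ Ω₂ :=
  Pi.disjoint_iff.symm

lemma exists_disjoint_mor (Ω : Obj r) : ∃ Ω' : Obj r, Disjoint Ω Ω' ∧ Nonempty (Mor Ω Ω') := by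
  refine ⟨fun i => (Ω i).image (· + ((Ω i).sup id + 1)), Pi.disjoint_iff.2 fun i => ?_,
    ⟨fun i => imageEquiv _ (add_left_injective _).injOn⟩⟩
  simp only [Finset.disjoint_left, Finset.mem_image, not_exists, not_and]
  intro a ha c _ hca
  have : a ≤ (Ω i).sup id := Finset.le_sup (f := id) ha
  omega

lemma indec_subset (F : Species r) (E : CompOp F) (Ω : Obj r) :
    indec F E Ω ⊆ (F.obj Ω : Set ℕ) := by
  unfold indec
  split_ifs
  exacts [Set.empty_subset _, Set.sdiff_subset]

namespace CompOp

variable {F : Species r} (E : CompOp F)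

def img (Ω₁ Ω₂ : Obj r) : Set ℕ := E.η Ω₁ Ω₂ '' ((F.obj Ω₁ : Set ℕ) ×ˢ (F.obj Ω₂ : Set ℕ))

lemma img_subset {Ω₁ Ω₂ : Obj r} (h : Disjoint Ω₁ Ω₂) :
    E.img Ω₁ Ω₂ ⊆ (F.obj (Ω₁ ⊔ Ω₂) : Set ℕ) := by
  rintro _ ⟨⟨x, y⟩, ⟨hx, hy⟩, rfl⟩
  exact E.mem_η (oDisj_iff_disjoint.2 h) x hx y hy

lemma img_inter_img {Ω₁ Ω₂ Ω₃ Ω₄ : Obj r} (h₁₂ : Disjoint Ω₁ Ω₂) (h₃₄ : Disjoint Ω₃ Ω₄)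
    (h : Ω₁ ⊔ Ω₂ = Ω₃ ⊔ Ω₄) :
    E.img Ω₁ Ω₂ ∩ E.img Ω₃ Ω₄ =
      E.η Ω₁ Ω₂ '' (E.img (Ω₁ ⊓ Ω₃) (Ω₁ ⊓ Ω₄) ×ˢ E.img (Ω₂ ⊓ Ω₃) (Ω₂ ⊓ Ω₄)) :=
  E.D1 (oDisj_iff_disjoint.2 h₁₂) (oDisj_iff_disjoint.2 h₃₄) h

/-- Axiom (D1) for a decomposition against itself, with the outer `η` cancelled. -/
lemma prod_eq_img_bot_prod_img_bot {Ω₁ Ω₂ : Obj r} (h : Disjoint Ω₁ Ω₂) :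
    (F.obj Ω₁ : Set ℕ) ×ˢ (F.obj Ω₂ : Set ℕ) = E.img Ω₁ ⊥ ×ˢ E.img ⊥ Ω₂ := by
  have hD1 := E.img_inter_img h h rfl
  rw [Set.inter_self, inf_idem, inf_idem, h.eq_bot, h.symm.eq_bot] at hD1
  have h₁ : E.img Ω₁ ⊥ ⊆ (F.obj Ω₁ : Set ℕ) := by
    simpa using E.img_subset (disjoint_bot_right (a := Ω₁))
  have h₂ : E.img ⊥ Ω₂ ⊆ (F.obj Ω₂ : Set ℕ) := by
    simpa using E.img_subset (disjoint_bot_left (a := Ω₂))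
  exact ((E.inj_η (oDisj_iff_disjoint.2 h)).image_eq_image_iff subset_rfl
    (Set.prod_mono h₁ h₂)).1 hD1

lemma obj_bot_nonempty (E : CompOp F) {Ω : Obj r} {x : ℕ} (hx : x ∈ F.obj Ω) :
    (F.obj ⊥).Nonempty := by
  obtain ⟨Ω', hdisj, ⟨f⟩⟩ := exists_disjoint_mor Ω
  have hmem : (x, F.map f x) ∈ (F.obj Ω : Set ℕ) ×ˢ (F.obj Ω' : Set ℕ) :=
    ⟨hx, F.map_mem f x hx⟩
  rw [E.prod_eq_img_bot_prod_img_bot hdisj] at hmem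
  obtain ⟨⟨_, e⟩, ⟨_, he⟩, _⟩ := hmem.1
  exact ⟨e, he⟩

lemma mem_img_bot_left {Ω : Obj r} {x : ℕ} (hx : x ∈ F.obj Ω) : x ∈ E.img ⊥ Ω := by
  obtain ⟨e, he⟩ := E.obj_bot_nonempty hx
  have hmem : (e, x) ∈ (F.obj ⊥ : Set ℕ) ×ˢ (F.obj Ω : Set ℕ) := ⟨he, hx⟩
  rw [E.prod_eq_img_bot_prod_img_bot disjoint_bot_left] at hmem
  exact hmem.2

lemma mem_img_bot_right {Ω : Obj r} {x : ℕ} (hx : x ∈ F.obj Ω) : x ∈ E.img Ω ⊥ := by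
  obtain ⟨e, he⟩ := E.obj_bot_nonempty hx
  have hmem : (x, e) ∈ (F.obj Ω : Set ℕ) ×ˢ (F.obj ⊥ : Set ℕ) := ⟨hx, he⟩
  rw [E.prod_eq_img_bot_prod_img_bot disjoint_bot_right] at hmem
  exact hmem.1

lemma exists_mem_img_of_not_mem_indec {Ω : Obj r} {y : ℕ} (hΩ : Ω ≠ ⊥)
    (hy : y ∈ F.obj Ω) (hy' : y ∉ indec F E Ω) :
    ∃ A B : Obj r, Disjoint A B ∧ A ≠ ⊥ ∧ B ≠ ⊥ ∧ A ⊔ B = Ω ∧ y ∈ E.img A B := by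
  rw [indec, oEmpty_eq_bot, if_neg hΩ] at hy'
  simp only [Set.mem_sdiff, Set.mem_iUnion, not_and, not_not] at hy'
  obtain ⟨⟨A, B⟩, hAB, hA, hB, hU, hyAB⟩ := hy' hy
  exact ⟨A, B, oDisj_iff_disjoint.1 hAB, hA, hB, hU, hyAB⟩

/-- Axiom (D1) for `(Ω₁, Ω − Ω₁)` against `(A, Ω − A)`, using `z ∈ η(F[∅] × F[Ω − Ω₁])`. -/
lemma eta_mem_img_sdiff {Ω Ω₁ A B : Obj r} (hΩ₁ : Ω₁ ≤ Ω) (hAB : Disjoint A B)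
    (hU : A ⊔ B = Ω₁) {y z : ℕ} (hy : y ∈ E.img A B) (hz : z ∈ F.obj (Ω \ Ω₁)) :
    E.η Ω₁ (Ω \ Ω₁) (y, z) ∈ E.img A (Ω \ A) := by
  have hA : A ≤ Ω₁ := hU ▸ le_sup_left
  have hD1 := E.img_inter_img disjoint_sdiff_self_right disjoint_sdiff_self_right
    ((sup_sdiff_cancel_right hΩ₁).trans (sup_sdiff_cancel_right (hA.trans hΩ₁)).symm)
  have e₁ : Ω₁ ⊓ A = A := inf_eq_right.2 hA
  have e₂ : Ω₁ ⊓ (Ω \ A) = B := by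
    rw [← inf_sdiff_assoc, inf_eq_left.2 hΩ₁, ← hU, sup_sdiff_left_self, hAB.symm.sdiff_eq_left]
  have e₃ : Ω \ Ω₁ ⊓ A = ⊥ := (disjoint_sdiff_self_left.mono_right hA).eq_bot
  have e₄ : Ω \ Ω₁ ⊓ (Ω \ A) = Ω \ Ω₁ := inf_eq_left.2 (sdiff_le_sdiff_left hA)
  rw [e₁, e₂, e₃, e₄] at hD1
  have hmem : E.η Ω₁ (Ω \ Ω₁) (y, z) ∈ E.η Ω₁ (Ω \ Ω₁) '' (E.img A B ×ˢ E.img ⊥ (Ω \ Ω₁)) :=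
    Set.mem_image_of_mem _ ⟨hy, E.mem_img_bot_left hz⟩
  rw [← hD1] at hmem
  exact hmem.2

/-- Descend to a minimal left part `Ω₁`: its factor is then indecomposable. -/
lemma exists_indec_left_factor {Ω : Obj r} {x : ℕ} :
    ∀ Ω₁ : Obj r, Ω₁ ≠ ⊥ → Ω₁ ≤ Ω → x ∈ E.img Ω₁ (Ω \ Ω₁) →
      ∃ Ω₀ ≤ Ω, x ∈ E.η Ω₀ (Ω \ Ω₀) '' (indec F E Ω₀ ×ˢ (F.obj (Ω \ Ω₀) : Set ℕ)) := by
  intro Ω₁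
  induction Ω₁ using WellFoundedLT.induction with
  | ind Ω₁ ih =>
    rintro hΩ₁ hΩ₁Ω ⟨⟨y, z⟩, ⟨hy, hz⟩, rfl⟩
    by_cases hyi : y ∈ indec F E Ω₁
    · exact ⟨Ω₁, hΩ₁Ω, ⟨(y, z), ⟨hyi, hz⟩, rfl⟩⟩
    obtain ⟨A, B, hAB, hA, hB, hU, hyAB⟩ := E.exists_mem_img_of_not_mem_indec hΩ₁ hy hyi
    have hAΩ₁ : A < Ω₁ := by
      refine lt_of_le_of_ne (hU ▸ le_sup_left) fun hAeq => hB ?_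
      exact hAB.symm.eq_bot_of_le (hAeq ▸ hU ▸ le_sup_right)
    exact ih A hAΩ₁ hA (hAΩ₁.le.trans hΩ₁Ω) (E.eta_mem_img_sdiff hΩ₁Ω hAB hU hyAB hz)

lemma indecK_subset (k : ℕ) (Ω : Obj r) : indecK F E k Ω ⊆ (F.obj Ω : Set ℕ) := by
  induction k generalizing Ω with
  | zero =>
    simp only [indecK]
    split_ifs with h
    exacts [h ▸ subset_rfl, Set.empty_subset _]
  | succ k ih =>
    simp only [indecK, Set.iUnion_subset_iff, oSub_iff_le, oDiff_eq_sdiff]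
    rintro Ω₁ hΩ₁ _ ⟨⟨y, z⟩, ⟨hy, hz⟩, rfl⟩
    have := E.img_subset (disjoint_sdiff_self_right (x := Ω₁) (y := Ω))
      ⟨(y, z), ⟨indec_subset F E Ω₁ hy, ih _ hz⟩, rfl⟩
    rwa [sup_sdiff_cancel_right hΩ₁] at this

lemma exists_mem_indecK {Ω : Obj r} {x : ℕ} (hx : x ∈ F.obj Ω) :
    ∃ k, x ∈ indecK F E k Ω := by
  induction Ω using WellFoundedLT.induction generalizing x with
  | ind Ω ih =>
    by_cases hΩ : Ω = ⊥
    · exact ⟨0, by simpa [indecK, oEmpty_eq_bot, hΩ] using hx⟩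
    have hx' : x ∈ E.img Ω (Ω \ Ω) := sdiff_self (a := Ω) ▸ E.mem_img_bot_right hx
    obtain ⟨Ω₁, hΩ₁, ⟨y, z⟩, ⟨hy, hz⟩, rfl⟩ := E.exists_indec_left_factor Ω hΩ le_rfl hx'
    have hΩ₁ne : Ω₁ ≠ ⊥ := by
      rintro rfl
      simp [indec, oEmpty_eq_bot] at hy
    obtain ⟨k, hk⟩ := ih (Ω \ Ω₁) (sdiff_lt hΩ₁ hΩ₁ne) hz
    refine ⟨k + 1, ?_⟩
    simp only [indecK, Set.mem_iUnion]
    exact ⟨Ω₁, hΩ₁, ⟨(y, z), ⟨hy, hk⟩, rfl⟩⟩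

end CompOp

theorem stmt14_general {r : ℕ} (F : Species r) (E : CompOp F)
    (Ω : Obj r) :
    (F.obj Ω : Set ℕ) = ⋃ k : ℕ, indecK F E k Ω :=
  Set.Subset.antisymm (fun _ hx => Set.mem_iUnion.2 (E.exists_mem_indecK hx))
    (Set.iUnion_subset fun k => E.indecK_subset k Ω)

/-- `F[Ω] = ⋃_{k ≥ 0} F_Η^(k)[Ω]` for every object `Ω`. -/
theorem stmt14 {r : ℕ} (hr : 0 < r) (F : Species r) (E : CompOp F)
    (hF : ∃ Ω : Obj r, (F.obj Ω).Nonempty)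
    (Ω : Obj r) :
    (F.obj Ω : Set ℕ) = ⋃ k : ℕ, indecK F E k Ω :=
  stmt14_general F E Ω

end
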